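/- arXiv:2408.15742 — 7 statements merged into one kernel-verified Lean document; each statement's English description precedes it below -/
import Mathlib

section
/- Let H : Ω → ℝⁿ be strongly monotone with constant c > 0 on a convex compact set Ω ⊆ ℝⁿ, and let F₁, F₂ ⊆ Ω be nonempty closed convex subsets. If f₁ solves the variational inequality (φ - f₁)·H(f₁) ≥ 0 for all φ ∈ F₁, and f₂ solves the analogous VI over F₂, and v := f₂ - f₁' for some f₁' ∈ F₁ with f₂ - v ∈ F₁ and f₁ + v ∈ F₂, then c‖f₂ - f₁‖² ≤ (H(f₂) - H(f₁))·v. -/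
theorem vi_perturbation_inequality (n : ℕ)
    (Ω : Set (EuclideanSpace ℝ (Fin n))) (hΩconv : Convex ℝ Ω) (hΩcpt : IsCompact Ω)
    (H : EuclideanSpace ℝ (Fin n) → EuclideanSpace ℝ (Fin n))
    (c : ℝ) (hc : 0 < c)
    (hmono : ∀ x ∈ Ω, ∀ y ∈ Ω, c * ‖x - y‖ ^ 2 ≤ inner ℝ (H x - H y) (x - y))
    (F₁ F₂ : Set (EuclideanSpace ℝ (Fin n)))
    (hF₁ : F₁.Nonempty) (hF₁c : IsClosed F₁) (hF₁conv : Convex ℝ F₁) (hF₁Ω : F₁ ⊆ Ω)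
    (hF₂ : F₂.Nonempty) (hF₂c : IsClosed F₂) (hF₂conv : Convex ℝ F₂) (hF₂Ω : F₂ ⊆ Ω)
    (f₁ f₂ : EuclideanSpace ℝ (Fin n))
    (hf₁ : f₁ ∈ F₁) (hVI₁ : ∀ φ ∈ F₁, (0:ℝ) ≤ inner ℝ (H f₁) (φ - f₁))
    (hf₂ : f₂ ∈ F₂) (hVI₂ : ∀ φ ∈ F₂, (0:ℝ) ≤ inner ℝ (H f₂) (φ - f₂))
    (v : EuclideanSpace ℝ (Fin n))
    (hv₁ : f₂ - v ∈ F₁) (hv₂ : f₁ + v ∈ F₂) :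
    c * ‖f₂ - f₁‖ ^ 2 ≤ inner ℝ (H f₂ - H f₁) v := by
  have h1 := hVI₁ _ hv₁
  have h2 := hVI₂ _ hv₂
  have hm := hmono f₂ (hF₂Ω hf₂) f₁ (hF₁Ω hf₁)
  simp only [inner_sub_left, inner_sub_right, inner_add_right] at *
  linarith
end

section
/- In the two-class routing game on a network with a single origin-destination pair and total demand D, with feasible sets F(α) parametrized by the fleet share α ∈ [0,1] (class S has demand (1-α)D and class C has demand αD), if the game operator H is Lipschitz with constant Q and strongly monotone with constant c on [0,D]^{2L}, then the unique equilibrium load f*(α) is Lipschitz continuous in α with Lipschitz constant k = Q√(2L)·D / c. -/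
open scoped BigOperators

/-- Feasible path flows routing a given demand over `P` paths (single OD pair). -/
def flows (P : ℕ) (dem : ℝ) : Set (Fin P → ℝ) :=
  {z | (∀ p, 0 ≤ z p) ∧ ∑ p, z p = dem}

/-- Feasible two-class link loads at fleet share `α`: class S (coordinates `inl`)
is induced by a path flow of demand `(1-α)D`, class C (coordinates `inr`) by a
path flow of demand `αD`. -/
def feas (L P : ℕ) (A : Matrix (Fin L) (Fin P) ℝ) (D α : ℝ) :
    Set (EuclideanSpace ℝ (Fin L ⊕ Fin L)) :=
  {f | ∃ zS ∈ flows P ((1 - α) * D), ∃ zC ∈ flows P (α * D),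
      (∀ l, f (Sum.inl l) = ∑ p, A l p * zS p) ∧
      (∀ l, f (Sum.inr l) = ∑ p, A l p * zC p)}

private lemma sum_coeff_nonneg {P : ℕ} {a z : Fin P → ℝ}
    (ha : ∀ p, a p = 0 ∨ a p = 1) (hz : ∀ p, 0 ≤ z p) :
    0 ≤ ∑ p, a p * z p := by
  apply Finset.sum_nonneg
  intro p _
  rcases ha p with h | h <;> simp [h, hz p]

private lemma sum_coeff_le {P : ℕ} {a z : Fin P → ℝ}
    (ha : ∀ p, a p = 0 ∨ a p = 1) (hz : ∀ p, 0 ≤ z p) :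
    ∑ p, a p * z p ≤ ∑ p, z p := by
  apply Finset.sum_le_sum
  intro p _
  rcases ha p with h | h <;> simp [h, hz p]

private lemma feas_mem_Icc {L P : ℕ} {A : Matrix (Fin L) (Fin P) ℝ}
    (hA : ∀ l p, A l p = 0 ∨ A l p = 1) {D α : ℝ} (hD : 0 ≤ D)
    (hα : α ∈ Set.Icc (0:ℝ) 1) {f : EuclideanSpace ℝ (Fin L ⊕ Fin L)}
    (hf : f ∈ feas L P A D α) : ∀ i, f i ∈ Set.Icc (0:ℝ) D := by
  obtain ⟨zS, ⟨hzS0, hzSs⟩, zC, ⟨hzC0, hzCs⟩, hS, hC⟩ := hf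
  intro i
  rcases i with l | l
  · rw [hS l]
    constructor
    · exact sum_coeff_nonneg (hA l) hzS0
    · calc ∑ p, A l p * zS p ≤ ∑ p, zS p := sum_coeff_le (hA l) hzS0
        _ = (1 - α) * D := hzSs
        _ ≤ 1 * D := by
            apply mul_le_mul_of_nonneg_right _ hD
            linarith [hα.1]
        _ = D := one_mul D
  · rw [hC l]
    constructor
    · exact sum_coeff_nonneg (hA l) hzC0
    · calc ∑ p, A l p * zC p ≤ ∑ p, zC p := sum_coeff_le (hA l) hzC0
        _ = α * D := hzCs
        _ ≤ 1 * D := mul_le_mul_of_nonneg_right hα.2 hD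
        _ = D := one_mul D

/-- Given feasible points at shares `α₁ ≤ α₂`, there is a common shift vector `v`
with small coordinates moving the first into the feasible set of the second and
conversely. -/
private lemma shift_exists {L P : ℕ} {A : Matrix (Fin L) (Fin P) ℝ}
    (hA : ∀ l p, A l p = 0 ∨ A l p = 1) {D : ℝ} (hD : 0 ≤ D)
    {α₁ α₂ : ℝ} (h10 : 0 ≤ α₁) (h12 : α₁ ≤ α₂) (h21 : α₂ ≤ 1)
    {f₁ f₂ : EuclideanSpace ℝ (Fin L ⊕ Fin L)}
    (hf₁ : f₁ ∈ feas L P A D α₁) (hf₂ : f₂ ∈ feas L P A D α₂) :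
    ∃ v : EuclideanSpace ℝ (Fin L ⊕ Fin L),
      f₁ + v ∈ feas L P A D α₂ ∧ f₂ - v ∈ feas L P A D α₁ ∧
      ∀ i, |v i| ≤ (α₂ - α₁) * D := by
  obtain ⟨zS₁, ⟨hzS₁0, hzS₁s⟩, zC₁, ⟨hzC₁0, hzC₁s⟩, hS₁, hC₁⟩ := hf₁
  obtain ⟨zS₂, ⟨hzS₂0, hzS₂s⟩, zC₂, ⟨hzC₂0, hzC₂s⟩, hS₂, hC₂⟩ := hf₂
  set δ : ℝ := (α₂ - α₁) * D with hδdef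
  have hδ0 : 0 ≤ δ := mul_nonneg (by linarith) hD
  set S : ℝ := (1 - α₁) * D with hSdef
  set T : ℝ := α₂ * D with hTdef
  have hS0 : 0 ≤ S := mul_nonneg (by linarith) hD
  have hT0 : 0 ≤ T := mul_nonneg (by linarith) hD
  have hδS : δ ≤ S := mul_le_mul_of_nonneg_right (by linarith) hD
  have hδT : δ ≤ T := mul_le_mul_of_nonneg_right (by linarith) hD
  have hrS0 : 0 ≤ δ / S := div_nonneg hδ0 hS0
  have hrT0 : 0 ≤ δ / T := div_nonneg hδ0 hT0
  have hrS1 : δ / S ≤ 1 := by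
    rcases eq_or_lt_of_le hS0 with h | h
    · have : δ = 0 := le_antisymm (by linarith) hδ0
      simp [this]
    · exact div_le_one_of_le₀ hδS hS0
  have hrT1 : δ / T ≤ 1 := by
    rcases eq_or_lt_of_le hT0 with h | h
    · have : δ = 0 := le_antisymm (by linarith) hδ0
      simp [this]
    · exact div_le_one_of_le₀ hδT hT0
  have hrSS : δ / S * S = δ := by
    rcases eq_or_lt_of_le hS0 with h | h
    · have hδz : δ = 0 := le_antisymm (by linarith) hδ0
      simp [hδz, ← h]
    · exact div_mul_cancel₀ δ (ne_of_gt h)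
  have hrTT : δ / T * T = δ := by
    rcases eq_or_lt_of_le hT0 with h | h
    · have hδz : δ = 0 := le_antisymm (by linarith) hδ0
      simp [hδz, ← h]
    · exact div_mul_cancel₀ δ (ne_of_gt h)
  set wS : Fin P → ℝ := fun p => -(δ / S) * zS₁ p with hwSdef
  set wC : Fin P → ℝ := fun p => (δ / T) * zC₂ p with hwCdef
  have hwSsum : ∑ p, wS p = -δ := by
    simp only [hwSdef, ← Finset.mul_sum, hzS₁s, ← hSdef]
    rw [neg_mul, hrSS]
  have hwCsum : ∑ p, wC p = δ := by
    simp only [hwCdef, ← Finset.mul_sum, hzC₂s, ← hTdef]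
    exact hrTT
  set v : EuclideanSpace ℝ (Fin L ⊕ Fin L) :=
    WithLp.toLp 2 (fun i => Sum.elim (fun l => ∑ p, A l p * wS p)
      (fun l => ∑ p, A l p * wC p) i) with hvdef
  refine ⟨v, ?_, ?_, ?_⟩
  · -- f₁ + v ∈ feas α₂
    refine ⟨fun p => zS₁ p + wS p, ⟨?_, ?_⟩, fun p => zC₁ p + wC p, ⟨?_, ?_⟩, ?_, ?_⟩
    · intro p
      show 0 ≤ zS₁ p + wS p
      have h : zS₁ p + wS p = (1 - δ / S) * zS₁ p := by simp [hwSdef]; try ring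
      rw [h]
      exact mul_nonneg (by linarith) (hzS₁0 p)
    · show ∑ p, (zS₁ p + wS p) = (1 - α₂) * D
      rw [Finset.sum_add_distrib, hzS₁s, hwSsum, hSdef, hδdef]
      ring
    · intro p
      show 0 ≤ zC₁ p + wC p
      exact add_nonneg (hzC₁0 p) (mul_nonneg hrT0 (hzC₂0 p))
    · show ∑ p, (zC₁ p + wC p) = α₂ * D
      rw [Finset.sum_add_distrib, hzC₁s, hwCsum, hδdef]
      ring
    · intro l
      have h : (f₁ + v) (Sum.inl l) = f₁ (Sum.inl l) + ∑ p, A l p * wS p := rfl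
      rw [h, hS₁ l, ← Finset.sum_add_distrib]
      exact Finset.sum_congr rfl fun p _ => by ring
    · intro l
      have h : (f₁ + v) (Sum.inr l) = f₁ (Sum.inr l) + ∑ p, A l p * wC p := rfl
      rw [h, hC₁ l, ← Finset.sum_add_distrib]
      exact Finset.sum_congr rfl fun p _ => by ring
  · -- f₂ - v ∈ feas α₁
    refine ⟨fun p => zS₂ p - wS p, ⟨?_, ?_⟩, fun p => zC₂ p - wC p, ⟨?_, ?_⟩, ?_, ?_⟩
    · intro p
      show 0 ≤ zS₂ p - wS p
      have h : zS₂ p - wS p = zS₂ p + (δ / S) * zS₁ p := by simp [hwSdef]; try ring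
      rw [h]
      exact add_nonneg (hzS₂0 p) (mul_nonneg hrS0 (hzS₁0 p))
    · show ∑ p, (zS₂ p - wS p) = (1 - α₁) * D
      rw [Finset.sum_sub_distrib, hzS₂s, hwSsum, hδdef]
      ring
    · intro p
      show 0 ≤ zC₂ p - wC p
      have h : zC₂ p - wC p = (1 - δ / T) * zC₂ p := by simp [hwCdef]; try ring
      rw [h]
      exact mul_nonneg (by linarith) (hzC₂0 p)
    · show ∑ p, (zC₂ p - wC p) = α₁ * D
      rw [Finset.sum_sub_distrib, hzC₂s, hwCsum, hTdef, hδdef]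
      ring
    · intro l
      have h : (f₂ - v) (Sum.inl l) = f₂ (Sum.inl l) - ∑ p, A l p * wS p := rfl
      rw [h, hS₂ l, ← Finset.sum_sub_distrib]
      exact Finset.sum_congr rfl fun p _ => by ring
    · intro l
      have h : (f₂ - v) (Sum.inr l) = f₂ (Sum.inr l) - ∑ p, A l p * wC p := rfl
      rw [h, hC₂ l, ← Finset.sum_sub_distrib]
      exact Finset.sum_congr rfl fun p _ => by ring
  · -- coordinatewise bound
    intro i
    have key : ∀ (w : Fin P → ℝ) (l : Fin L), (∀ p, |w p| ≤ |w p|) →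
        |∑ p, A l p * w p| ≤ ∑ p, |w p| := by
      intro w l _
      calc |∑ p, A l p * w p| ≤ ∑ p, |A l p * w p| := Finset.abs_sum_le_sum_abs _ _
        _ ≤ ∑ p, |w p| := by
            apply Finset.sum_le_sum
            intro p _
            rcases hA l p with h | h <;> simp [h, abs_nonneg]
    rcases i with l | l
    · have h1 : |∑ p, A l p * wS p| ≤ ∑ p, |wS p| := key wS l (fun p => le_rfl)
      have h2 : ∑ p, |wS p| = δ := by
        have : ∀ p, |wS p| = (δ / S) * zS₁ p := by
          intro p
          rw [hwSdef]
          simp only [neg_mul, abs_neg, abs_mul]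
          rw [abs_of_nonneg hrS0, abs_of_nonneg (hzS₁0 p)]
        simp only [this]; rw [← Finset.mul_sum, hzS₁s, hrSS]
      simpa [h2, hvdef] using h1
    · have h1 : |∑ p, A l p * wC p| ≤ ∑ p, |wC p| := key wC l (fun p => le_rfl)
      have h2 : ∑ p, |wC p| = δ := by
        have : ∀ p, |wC p| = (δ / T) * zC₂ p := by
          intro p
          rw [hwCdef]
          simp only [abs_mul]
          rw [abs_of_nonneg hrT0, abs_of_nonneg (hzC₂0 p)]
        simp only [this]; rw [← Finset.mul_sum, hzC₂s, hrTT]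
      simpa [h2, hvdef] using h1

theorem equilibrium_load_lipschitz_in_fleet_share (L P : ℕ)
    (A : Matrix (Fin L) (Fin P) ℝ) (hA : ∀ l p, A l p = 0 ∨ A l p = 1)
    (D : ℝ) (hD : 0 ≤ D)
    (H : EuclideanSpace ℝ (Fin L ⊕ Fin L) → EuclideanSpace ℝ (Fin L ⊕ Fin L))
    (Q c : ℝ) (hQ : 0 < Q) (hc : 0 < c)
    (Ω : Set (EuclideanSpace ℝ (Fin L ⊕ Fin L)))
    (hΩ : Ω = {f | ∀ i, f i ∈ Set.Icc (0:ℝ) D})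
    (hlip : ∀ x ∈ Ω, ∀ y ∈ Ω, ‖H x - H y‖ ≤ Q * ‖x - y‖)
    (hmono : ∀ x ∈ Ω, ∀ y ∈ Ω, c * ‖x - y‖ ^ 2 ≤ inner ℝ (H x - H y) (x - y))
    (fstar : ℝ → EuclideanSpace ℝ (Fin L ⊕ Fin L))
    (hfeq : ∀ α ∈ Set.Icc (0:ℝ) 1, fstar α ∈ feas L P A D α ∧
      ∀ φ ∈ feas L P A D α, (0:ℝ) ≤ inner ℝ (H (fstar α)) (φ - fstar α)) :
    ∀ α₁ ∈ Set.Icc (0:ℝ) 1, ∀ α₂ ∈ Set.Icc (0:ℝ) 1,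
      ‖fstar α₂ - fstar α₁‖ ≤ Q * Real.sqrt (2 * L) * D / c * |α₂ - α₁| := by
  have hRHS0 : ∀ a b : ℝ, 0 ≤ Q * Real.sqrt (2 * L) * D / c * |a - b| := fun a b =>
    mul_nonneg (div_nonneg (mul_nonneg (mul_nonneg hQ.le (Real.sqrt_nonneg _)) hD) hc.le)
      (abs_nonneg _)
  have key : ∀ α₁ ∈ Set.Icc (0:ℝ) 1, ∀ α₂ ∈ Set.Icc (0:ℝ) 1, α₁ ≤ α₂ →
      ‖fstar α₂ - fstar α₁‖ ≤ Q * Real.sqrt (2 * L) * D / c * |α₂ - α₁| := by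
    intro α₁ hα₁ α₂ hα₂ h12
    obtain ⟨hf₁, hVI₁⟩ := hfeq α₁ hα₁
    obtain ⟨hf₂, hVI₂⟩ := hfeq α₂ hα₂
    set f₁ := fstar α₁
    set f₂ := fstar α₂
    have hΩ1 : f₁ ∈ Ω := by rw [hΩ]; exact feas_mem_Icc hA hD hα₁ hf₁
    have hΩ2 : f₂ ∈ Ω := by rw [hΩ]; exact feas_mem_Icc hA hD hα₂ hf₂
    obtain ⟨v, hv₂, hv₁, hvb⟩ := shift_exists hA hD hα₁.1 h12 hα₂.2 hf₁ hf₂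
    set δ : ℝ := (α₂ - α₁) * D with hδdef
    have hδ0 : 0 ≤ δ := mul_nonneg (by linarith) hD
    -- norm bound on v
    have hvnorm : ‖v‖ ≤ Real.sqrt (2 * L) * δ := by
      rw [EuclideanSpace.norm_eq]
      have hsum : ∑ i, ‖v i‖ ^ 2 ≤ (2 * L) * δ ^ 2 := by
        calc ∑ i, ‖v i‖ ^ 2 ≤ ∑ _i : Fin L ⊕ Fin L, δ ^ 2 := by
              apply Finset.sum_le_sum
              intro i _
              rw [Real.norm_eq_abs]
              have := hvb i
              nlinarith [abs_nonneg (v i)]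
          _ = (2 * L) * δ ^ 2 := by
              rw [Finset.sum_const, Finset.card_univ]
              simp only [Fintype.card_sum, Fintype.card_fin, nsmul_eq_mul]
              push_cast
              ring
      calc Real.sqrt (∑ i, ‖v i‖ ^ 2) ≤ Real.sqrt ((2 * L) * δ ^ 2) :=
            Real.sqrt_le_sqrt hsum
        _ = Real.sqrt (2 * L) * δ := by
            rw [Real.sqrt_mul (by positivity), Real.sqrt_sq hδ0]
    -- VI based chain
    have hid : (inner ℝ (H f₂ - H f₁) (f₂ - f₁) : ℝ) =
        inner ℝ (H f₂ - H f₁) v - inner ℝ (H f₂) ((f₁ + v) - f₂)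
          - inner ℝ (H f₁) ((f₂ - v) - f₁) := by
      simp only [inner_sub_left, inner_sub_right, inner_add_right]
      ring
    have hVIa : (0:ℝ) ≤ inner ℝ (H f₂) ((f₁ + v) - f₂) := hVI₂ (f₁ + v) hv₂
    have hVIb : (0:ℝ) ≤ inner ℝ (H f₁) ((f₂ - v) - f₁) := hVI₁ (f₂ - v) hv₁
    have hmain : c * ‖f₂ - f₁‖ ^ 2 ≤ Q * ‖f₂ - f₁‖ * (Real.sqrt (2 * L) * δ) := by
      calc c * ‖f₂ - f₁‖ ^ 2 ≤ inner ℝ (H f₂ - H f₁) (f₂ - f₁) := hmono f₂ hΩ2 f₁ hΩ1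
        _ = inner ℝ (H f₂ - H f₁) v - inner ℝ (H f₂) ((f₁ + v) - f₂)
              - inner ℝ (H f₁) ((f₂ - v) - f₁) := hid
        _ ≤ inner ℝ (H f₂ - H f₁) v := by linarith
        _ ≤ ‖H f₂ - H f₁‖ * ‖v‖ := real_inner_le_norm _ _
        _ ≤ (Q * ‖f₂ - f₁‖) * ‖v‖ :=
            mul_le_mul_of_nonneg_right (hlip f₂ hΩ2 f₁ hΩ1) (norm_nonneg v)
        _ ≤ Q * ‖f₂ - f₁‖ * (Real.sqrt (2 * L) * δ) :=
            mul_le_mul_of_nonneg_left hvnorm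
              (mul_nonneg hQ.le (norm_nonneg _))
    rcases eq_or_lt_of_le (norm_nonneg (f₂ - f₁)) with h0 | h0
    · rw [← h0]
      exact hRHS0 α₂ α₁
    · have hstep : c * ‖f₂ - f₁‖ ≤ Q * (Real.sqrt (2 * L) * δ) := by
        have := mul_pos hc h0
        nlinarith [hmain, norm_nonneg (f₂ - f₁)]
      rw [abs_of_nonneg (by linarith : (0:ℝ) ≤ α₂ - α₁)]
      rw [div_mul_eq_mul_div, le_div_iff₀ hc]
      calc ‖f₂ - f₁‖ * c = c * ‖f₂ - f₁‖ := by ring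
        _ ≤ Q * (Real.sqrt (2 * L) * δ) := hstep
        _ = Q * Real.sqrt (2 * L) * D * (α₂ - α₁) := by rw [hδdef]; ring
  intro α₁ hα₁ α₂ hα₂
  rcases le_total α₁ α₂ with h | h
  · exact key α₁ hα₁ α₂ hα₂ h
  · have := key α₂ hα₂ α₁ hα₁ h
    rw [norm_sub_rev, abs_sub_comm]
    exact this
end

section
/- Let α₁ < α₂ in [0,1], f₁ ∈ F(α₁), f₂ ∈ F(α₂) be feasible two-class loads with total demand D, and define v = (-v^S, v^C) with v^S = ((α₂-α₁)/(1-α₁))·f₁^S and v^C = ((α₂-α₁)/α₂)·f₂^C. Then f₂ - v ∈ F(α₁), f₁ + v ∈ F(α₂), and ‖v‖ ≤ √(2L)·D·(α₂-α₁). -/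
open scoped BigOperators

theorem transfer_vector_feasibility (L P : ℕ)
    (A : Matrix (Fin L) (Fin P) ℝ) (hA : ∀ l p, A l p = 0 ∨ A l p = 1)
    (D : ℝ) (hD : 0 ≤ D)
    (α₁ α₂ : ℝ) (h₁ : 0 ≤ α₁) (h₁₂ : α₁ < α₂) (h₂ : α₂ ≤ 1)
    (f₁ f₂ : EuclideanSpace ℝ (Fin L ⊕ Fin L))
    (hf₁ : f₁ ∈ feas L P A D α₁) (hf₂ : f₂ ∈ feas L P A D α₂)
    (v : EuclideanSpace ℝ (Fin L ⊕ Fin L))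
    (hvS : ∀ l, v (Sum.inl l) = -((α₂ - α₁) / (1 - α₁) * f₁ (Sum.inl l)))
    (hvC : ∀ l, v (Sum.inr l) = (α₂ - α₁) / α₂ * f₂ (Sum.inr l)) :
    f₂ - v ∈ feas L P A D α₁ ∧ f₁ + v ∈ feas L P A D α₂ ∧
      ‖v‖ ≤ Real.sqrt (2 * L) * D * (α₂ - α₁) := by
  obtain ⟨zS₁, ⟨hzS₁, hzS₁s⟩, zC₁, ⟨hzC₁, hzC₁s⟩, hf₁S, hf₁C⟩ := hf₁
  obtain ⟨zS₂, ⟨hzS₂, hzS₂s⟩, zC₂, ⟨hzC₂, hzC₂s⟩, hf₂S, hf₂C⟩ := hf₂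
  have h1α : (0:ℝ) < 1 - α₁ := by linarith
  have hα₂ : (0:ℝ) < α₂ := by linarith
  have hΔ : (0:ℝ) ≤ α₂ - α₁ := by linarith
  set c1 : ℝ := (α₂ - α₁) / (1 - α₁) with hc1
  set c2 : ℝ := (α₂ - α₁) / α₂ with hc2
  have hc1n : 0 ≤ c1 := div_nonneg hΔ h1α.le
  have hc2n : 0 ≤ c2 := div_nonneg hΔ hα₂.le
  have hf₁Sb : ∀ l, 0 ≤ f₁ (Sum.inl l) ∧ f₁ (Sum.inl l) ≤ (1 - α₁) * D := by
    intro l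
    rw [hf₁S l]
    constructor
    · exact Finset.sum_nonneg fun p _ => by rcases hA l p with h | h <;> simp [h, hzS₁ p]
    · rw [← hzS₁s]
      exact Finset.sum_le_sum fun p _ => by rcases hA l p with h | h <;> simp [h, hzS₁ p]
  have hf₂Cb : ∀ l, 0 ≤ f₂ (Sum.inr l) ∧ f₂ (Sum.inr l) ≤ α₂ * D := by
    intro l
    rw [hf₂C l]
    constructor
    · exact Finset.sum_nonneg fun p _ => by rcases hA l p with h | h <;> simp [h, hzC₂ p]
    · rw [← hzC₂s]
      exact Finset.sum_le_sum fun p _ => by rcases hA l p with h | h <;> simp [h, hzC₂ p]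
  refine ⟨?_, ?_, ?_⟩
  · refine ⟨fun p => zS₂ p + c1 * zS₁ p,
      ⟨fun p => add_nonneg (hzS₂ p) (mul_nonneg hc1n (hzS₁ p)), ?_⟩,
      fun p => (α₁ / α₂) * zC₂ p,
      ⟨fun p => mul_nonneg (div_nonneg h₁ hα₂.le) (hzC₂ p), ?_⟩, ?_, ?_⟩
    · rw [Finset.sum_add_distrib, hzS₂s, ← Finset.mul_sum, hzS₁s, hc1]
      field_simp
      ring
    · rw [← Finset.mul_sum, hzC₂s]
      field_simp
    · intro l
      have : ∑ p, A l p * (zS₂ p + c1 * zS₁ p)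
          = f₂ (Sum.inl l) + c1 * f₁ (Sum.inl l) := by
        rw [hf₂S l, hf₁S l, Finset.mul_sum, ← Finset.sum_add_distrib]
        exact Finset.sum_congr rfl fun p _ => by ring
      rw [this]
      show f₂ (Sum.inl l) - v (Sum.inl l) = _
      rw [hvS l]; ring
    · intro l
      have : ∑ p, A l p * (α₁ / α₂ * zC₂ p) = (α₁ / α₂) * f₂ (Sum.inr l) := by
        rw [hf₂C l, Finset.mul_sum]
        exact Finset.sum_congr rfl fun p _ => by ring
      rw [this]
      show f₂ (Sum.inr l) - v (Sum.inr l) = _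
      rw [hvC l, hc2]
      field_simp
      ring
  · refine ⟨fun p => ((1 - α₂) / (1 - α₁)) * zS₁ p,
      ⟨fun p => mul_nonneg (div_nonneg (by linarith) h1α.le) (hzS₁ p), ?_⟩,
      fun p => zC₁ p + c2 * zC₂ p, ⟨fun p => add_nonneg (hzC₁ p) (mul_nonneg hc2n (hzC₂ p)), ?_⟩, ?_, ?_⟩
    · rw [← Finset.mul_sum, hzS₁s]
      field_simp
    · rw [Finset.sum_add_distrib, hzC₁s, ← Finset.mul_sum, hzC₂s, hc2]
      field_simp
      ring
    · intro l
      have : ∑ p, A l p * ((1 - α₂) / (1 - α₁) * zS₁ p)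
          = ((1 - α₂) / (1 - α₁)) * f₁ (Sum.inl l) := by
        rw [hf₁S l, Finset.mul_sum]
        exact Finset.sum_congr rfl fun p _ => by ring
      rw [this]
      show f₁ (Sum.inl l) + v (Sum.inl l) = _
      rw [hvS l]
      field_simp
      ring
    · intro l
      have : ∑ p, A l p * (zC₁ p + c2 * zC₂ p)
          = f₁ (Sum.inr l) + c2 * f₂ (Sum.inr l) := by
        rw [hf₁C l, hf₂C l, Finset.mul_sum, ← Finset.sum_add_distrib]
        exact Finset.sum_congr rfl fun p _ => by ring
      rw [this]
      show f₁ (Sum.inr l) + v (Sum.inr l) = _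
      rw [hvC l]
  · have hB : (0:ℝ) ≤ D * (α₂ - α₁) := mul_nonneg hD hΔ
    have hbS : ∀ l, |v (Sum.inl l)| ≤ D * (α₂ - α₁) := by
      intro l
      rw [hvS l, abs_neg, abs_of_nonneg (mul_nonneg hc1n (hf₁Sb l).1)]
      calc c1 * f₁ (Sum.inl l) ≤ c1 * ((1 - α₁) * D) :=
            mul_le_mul_of_nonneg_left (hf₁Sb l).2 hc1n
        _ = D * (α₂ - α₁) := by rw [hc1]; field_simp
    have hbC : ∀ l, |v (Sum.inr l)| ≤ D * (α₂ - α₁) := by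
      intro l
      rw [hvC l, abs_of_nonneg (mul_nonneg hc2n (hf₂Cb l).1)]
      calc c2 * f₂ (Sum.inr l) ≤ c2 * (α₂ * D) :=
            mul_le_mul_of_nonneg_left (hf₂Cb l).2 hc2n
        _ = D * (α₂ - α₁) := by rw [hc2]; field_simp
    have hsum : ∑ i, ‖v i‖ ^ 2 ≤ 2 * L * (D * (α₂ - α₁)) ^ 2 := by
      rw [Fintype.sum_sum_type]
      have h1 : ∑ l : Fin L, ‖v (Sum.inl l)‖ ^ 2 ≤ L * (D * (α₂ - α₁)) ^ 2 := by
        calc ∑ l : Fin L, ‖v (Sum.inl l)‖ ^ 2 ≤ ∑ _l : Fin L, (D * (α₂ - α₁)) ^ 2 :=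
              Finset.sum_le_sum fun l _ => by
                rw [Real.norm_eq_abs]
                exact pow_le_pow_left₀ (abs_nonneg _) (hbS l) 2
          _ = L * (D * (α₂ - α₁)) ^ 2 := by simp [Finset.sum_const, mul_comm]
      have h2 : ∑ l : Fin L, ‖v (Sum.inr l)‖ ^ 2 ≤ L * (D * (α₂ - α₁)) ^ 2 := by
        calc ∑ l : Fin L, ‖v (Sum.inr l)‖ ^ 2 ≤ ∑ _l : Fin L, (D * (α₂ - α₁)) ^ 2 :=
              Finset.sum_le_sum fun l _ => by
                rw [Real.norm_eq_abs]
                exact pow_le_pow_left₀ (abs_nonneg _) (hbC l) 2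
          _ = L * (D * (α₂ - α₁)) ^ 2 := by simp [Finset.sum_const, mul_comm]
      linarith
    have h2L : (0:ℝ) ≤ 2 * L := by positivity
    calc ‖v‖ = Real.sqrt (∑ i, ‖v i‖ ^ 2) := EuclideanSpace.norm_eq v
      _ ≤ Real.sqrt (2 * L * (D * (α₂ - α₁)) ^ 2) := Real.sqrt_le_sqrt hsum
      _ = Real.sqrt (2 * L) * (D * (α₂ - α₁)) := by
          rw [Real.sqrt_mul h2L, Real.sqrt_sq hB]
      _ = Real.sqrt (2 * L) * D * (α₂ - α₁) := by ring
end

section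
/- In a parallel two-terminal network at an equilibrium of the two-class game, the sets of links used by the selfish class S and by the coordinated class C must intersect: L^S ∩ L^C ≠ ∅. -/
open scoped BigOperators

theorem parallel_supports_intersect (L : ℕ) (d : Fin L → ℝ → ℝ)
    (fS fC : Fin L → ℝ)
    (hfS : ∀ l, 0 ≤ fS l) (hfC : ∀ l, 0 ≤ fC l)
    (hSpos : 0 < ∑ l, fS l) (hCpos : 0 < ∑ l, fC l)
    (hd' : ∀ l, 0 < fC l → 0 < deriv (d l) (fS l + fC l))
    (hWS : ∀ l, 0 < fS l → ∀ e, d l (fS l + fC l) ≤ d e (fS e + fC e))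
    (hWC : ∀ l, 0 < fC l → ∀ e,
      d l (fS l + fC l) + fC l * deriv (d l) (fS l + fC l) ≤
        d e (fS e + fC e) + fC e * deriv (d e) (fS e + fC e)) :
    ∃ l, 0 < fS l ∧ 0 < fC l := by
  by_contra h
  push_neg at h
  obtain ⟨l, hl⟩ : ∃ l, 0 < fS l := by
    by_contra hc; push_neg at hc
    have : ∑ l, fS l ≤ 0 := Finset.sum_nonpos (fun i _ => hc i)
    linarith
  obtain ⟨e, he⟩ : ∃ e, 0 < fC e := by
    by_contra hc; push_neg at hc
    have : ∑ l, fC l ≤ 0 := Finset.sum_nonpos (fun i _ => hc i)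
    linarith
  have hlC : fC l = 0 := le_antisymm (h l hl) (hfC l)
  have h1 := hWC e he l
  have h2 := hWS l hl e
  have h3 := hd' e he
  rw [hlC] at h1 h2
  have h4 := mul_pos he h3
  linarith
end

section
/- Parallel-network monotonicity (minimum delay): under strong monotonicity of the game operator and convex delays on a parallel network, if α₁ < α₂ and the supports of both classes at equilibrium coincide for α₁ and α₂ (L^S(α₁)=L^S(α₂) and L^C(α₁)=L^C(α₂)), then the minimum equilibrium delay satisfies θ(α₁) ≥ θ(α₂) and the minimum marginal delay satisfies μ(α₁) ≤ μ(α₂). -/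
open scoped BigOperators

/-- Equilibrium loads of the two-class game on a parallel network with link
delays `d`, total demand `D` and fleet share `α`: class S routes `(1-α)D` on
minimum-delay links, class C routes `αD` on minimum-marginal-delay links. -/
def ParallelEquilibrium (L : ℕ) (d : Fin L → ℝ → ℝ) (D α : ℝ)
    (fS fC : Fin L → ℝ) : Prop :=
  (∀ l, 0 ≤ fS l) ∧ (∀ l, 0 ≤ fC l) ∧
  (∑ l, fS l) = (1 - α) * D ∧ (∑ l, fC l) = α * D ∧
  (∀ l, 0 < fS l → ∀ e, d l (fS l + fC l) ≤ d e (fS e + fC e)) ∧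
  (∀ l, 0 < fC l → ∀ e,
    d l (fS l + fC l) + fC l * deriv (d l) (fS l + fC l) ≤
      d e (fS e + fC e) + fC e * deriv (d e) (fS e + fC e))

theorem parallel_min_delay_monotone
    (L : ℕ) (d : Fin L → ℝ → ℝ) (D : ℝ) (hD : 0 < D)
    (hC2 : ∀ l, ContDiff ℝ 2 (d l))
    (hincr : ∀ l, StrictMonoOn (d l) (Set.Ici 0))
    (hd' : ∀ l, ∀ x ≥ (0:ℝ), 0 < deriv (d l) x)
    (hconv : ∀ l, ConvexOn ℝ (Set.Ici 0) (d l))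
    (hsm1 : ∀ l, ∀ x ≥ (0:ℝ), ∀ y, 0 ≤ y → y ≤ x →
      0 < 2 * deriv (d l) x + y * deriv (deriv (d l)) x)
    (hsm2 : ∀ l, ∀ x ≥ (0:ℝ), ∀ y, 0 ≤ y → y ≤ x →
      1 / 4 * (2 * deriv (d l) x + y * deriv (deriv (d l)) x) < deriv (d l) x)
    (α₁ α₂ : ℝ) (h1 : 0 < α₁) (h12 : α₁ < α₂) (h2 : α₂ < 1)
    (fS₁ fC₁ fS₂ fC₂ : Fin L → ℝ)
    (heq₁ : ParallelEquilibrium L d D α₁ fS₁ fC₁)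
    (heq₂ : ParallelEquilibrium L d D α₂ fS₂ fC₂)
    (hsupS : ∀ l, 0 < fS₁ l ↔ 0 < fS₂ l)
    (hsupC : ∀ l, 0 < fC₁ l ↔ 0 < fC₂ l)
    :
    (∀ l l', 0 < fS₁ l → 0 < fS₂ l' →
      d l' (fS₂ l' + fC₂ l') ≤ d l (fS₁ l + fC₁ l)) ∧
    (∀ l l', 0 < fC₁ l → 0 < fC₂ l' →
      d l (fS₁ l + fC₁ l) + fC₁ l * deriv (d l) (fS₁ l + fC₁ l) ≤
        d l' (fS₂ l' + fC₂ l') + fC₂ l' * deriv (d l') (fS₂ l' + fC₂ l')) := by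
  obtain ⟨hS1nn, hC1nn, hS1sum, hC1sum, hS1eq, hC1eq⟩ := heq₁
  obtain ⟨hS2nn, hC2nn, hS2sum, hC2sum, hS2eq, hC2eq⟩ := heq₂
  -- derivative of each delay is monotone on [0,∞)
  have hdm : ∀ l, MonotoneOn (deriv (d l)) (Set.Ici 0) := fun l =>
    (hconv l).monotoneOn_deriv
      (fun x _ => ((hC2 l).differentiable (by norm_num)).differentiableAt)
  have hF1nn : ∀ l, 0 ≤ fS₁ l + fC₁ l := fun l => add_nonneg (hS1nn l) (hC1nn l)
  have hF2nn : ∀ l, 0 ≤ fS₂ l + fC₂ l := fun l => add_nonneg (hS2nn l) (hC2nn l)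
  -- inverse of strict monotonicity
  have hlt_of : ∀ (k : Fin L) (a b : ℝ), 0 ≤ a → 0 ≤ b → d k a < d k b → a < b := by
    intro k a b ha hb h
    by_contra hno
    have := (hincr k).monotoneOn hb ha (not_lt.1 hno)
    linarith
  -- monotonicity of marginal delay expression
  have hexpr : ∀ (k : Fin L) (a b x y : ℝ), 0 ≤ a → a ≤ b → 0 ≤ x → x ≤ y →
      d k a + x * deriv (d k) a ≤ d k b + y * deriv (d k) b := by
    intro k a b x y ha hab hx hxy
    have h1 : d k a ≤ d k b := (hincr k).monotoneOn ha (ha.trans hab) hab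
    have h2 : deriv (d k) a ≤ deriv (d k) b := hdm k ha (ha.trans hab) hab
    have h3 : 0 < deriv (d k) a := hd' k a ha
    nlinarith
  have hexprlt : ∀ (k : Fin L) (a b x y : ℝ), 0 ≤ a → a < b → 0 ≤ x → x ≤ y →
      d k a + x * deriv (d k) a < d k b + y * deriv (d k) b := by
    intro k a b x y ha hab hx hxy
    have h1 : d k a < d k b := hincr k ha (le_of_lt (lt_of_le_of_lt ha hab)) hab
    have h2 : deriv (d k) a ≤ deriv (d k) b := hdm k ha (ha.trans hab.le) hab.le
    have h3 : 0 < deriv (d k) a := hd' k a ha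
    nlinarith
  -- total flow is conserved
  have htot : ∑ l, (fS₁ l + fC₁ l) = ∑ l, (fS₂ l + fC₂ l) := by
    rw [Finset.sum_add_distrib, Finset.sum_add_distrib, hS1sum, hC1sum, hS2sum, hC2sum]
    ring
  -- total C-flow strictly increases
  have hCtot : ∑ l, fC₁ l < ∑ l, fC₂ l := by
    rw [hC1sum, hC2sum]
    nlinarith
  constructor
  · -- minimum delay is non-increasing
    intro l l' hl hl'
    by_contra hcon
    push_neg at hcon
    -- every S-used link gets strictly more flow
    have hA : ∀ k, 0 < fS₁ k → fS₁ k + fC₁ k < fS₂ k + fC₂ k := by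
      intro k hk
      have e1 : d k (fS₁ k + fC₁ k) ≤ d l (fS₁ l + fC₁ l) := hS1eq k hk l
      have e2 : d l' (fS₂ l' + fC₂ l') ≤ d k (fS₂ k + fC₂ k) := hS2eq l' hl' k
      exact hlt_of k _ _ (hF1nn k) (hF2nn k) (by linarith)
    classical
    set T := Finset.univ.filter (fun k : Fin L => 0 < fS₁ k) with hT
    set U := Finset.univ.filter (fun k : Fin L => ¬ 0 < fS₁ k) with hU
    have hlT : l ∈ T := by simp [hT, hl]
    have hsumT : ∑ k ∈ T, (fS₁ k + fC₁ k) < ∑ k ∈ T, (fS₂ k + fC₂ k) :=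
      Finset.sum_lt_sum_of_nonempty ⟨l, hlT⟩
        (fun k hk => hA k (by simpa [hT] using hk))
    have hsplit1 := Finset.sum_filter_add_sum_filter_not Finset.univ
      (fun k : Fin L => 0 < fS₁ k) (fun k => fS₁ k + fC₁ k)
    have hsplit2 := Finset.sum_filter_add_sum_filter_not Finset.univ
      (fun k : Fin L => 0 < fS₁ k) (fun k => fS₂ k + fC₂ k)
    have hsumU : ∑ k ∈ U, (fS₂ k + fC₂ k) < ∑ k ∈ U, (fS₁ k + fC₁ k) := by
      rw [hU]
      rw [hT] at hsumT
      linarith [htot]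
    have hz : ∀ k ∈ U, fS₁ k = 0 ∧ fS₂ k = 0 := by
      intro k hk
      rw [hU] at hk
      simp only [Finset.mem_filter, Finset.mem_univ, true_and] at hk
      have h1 : fS₁ k = 0 := le_antisymm (not_lt.1 hk) (hS1nn k)
      have h2 : fS₂ k = 0 := by
        by_contra hne
        exact hk ((hsupS k).2 (lt_of_le_of_ne (hS2nn k) (Ne.symm hne)))
      exact ⟨h1, h2⟩
    have hUC : ∑ k ∈ U, fC₂ k < ∑ k ∈ U, fC₁ k := by
      have e1 : ∑ k ∈ U, (fS₁ k + fC₁ k) = ∑ k ∈ U, fC₁ k :=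
        Finset.sum_congr rfl (fun k hk => by rw [(hz k hk).1, zero_add])
      have e2 : ∑ k ∈ U, (fS₂ k + fC₂ k) = ∑ k ∈ U, fC₂ k :=
        Finset.sum_congr rfl (fun k hk => by rw [(hz k hk).2, zero_add])
      linarith
    obtain ⟨j, hjU, hj⟩ := Finset.exists_lt_of_sum_lt hUC
    have hsplitC1 := Finset.sum_filter_add_sum_filter_not Finset.univ
      (fun k : Fin L => 0 < fS₁ k) fC₁
    have hsplitC2 := Finset.sum_filter_add_sum_filter_not Finset.univ
      (fun k : Fin L => 0 < fS₁ k) fC₂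
    have hTC : ∑ k ∈ T, fC₁ k < ∑ k ∈ T, fC₂ k := by
      rw [hT]; rw [hU] at hUC
      linarith
    obtain ⟨k, hkT, hk⟩ := Finset.exists_lt_of_sum_lt hTC
    have hkS1 : 0 < fS₁ k := by
      rw [hT] at hkT
      simpa using hkT
    have hkC2 : 0 < fC₂ k := lt_of_le_of_lt (hC1nn k) hk
    have hkC1 : 0 < fC₁ k := (hsupC k).2 hkC2
    have hjC1 : 0 < fC₁ j := lt_of_le_of_lt (hC2nn j) hj
    have hjC2 : 0 < fC₂ j := (hsupC j).1 hjC1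
    have hkj1 := hC1eq j hjC1 k
    have hjk2 := hC2eq k hkC2 j
    have hstrict1 : d k (fS₁ k + fC₁ k) + fC₁ k * deriv (d k) (fS₁ k + fC₁ k) <
        d k (fS₂ k + fC₂ k) + fC₂ k * deriv (d k) (fS₂ k + fC₂ k) :=
      hexprlt k _ _ _ _ (hF1nn k) (hA k hkS1) (hC1nn k) hk.le
    have hjz := hz j hjU
    have hjF : fS₂ j + fC₂ j < fS₁ j + fC₁ j := by
      rw [hjz.1, hjz.2]
      linarith
    have hstrict2 : d j (fS₂ j + fC₂ j) + fC₂ j * deriv (d j) (fS₂ j + fC₂ j) <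
        d j (fS₁ j + fC₁ j) + fC₁ j * deriv (d j) (fS₁ j + fC₁ j) :=
      hexprlt j _ _ _ _ (hF2nn j) hjF (hC2nn j) hj.le
    linarith
  · -- minimum marginal delay is non-decreasing
    intro l l' hl hl'
    by_contra hcon
    push_neg at hcon
    classical
    -- any link whose C-flow increases must be an S-used link with less total flow
    have hCl : ∀ k, fC₁ k < fC₂ k →
        0 < fS₁ k ∧ fS₂ k + fC₂ k < fS₁ k + fC₁ k := by
      intro k hk
      have hkC2 : 0 < fC₂ k := lt_of_le_of_lt (hC1nn k) hk
      have hkC1 : 0 < fC₁ k := (hsupC k).2 hkC2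
      have e1 := hC2eq k hkC2 l'
      have e2 := hC1eq l hl k
      have hFlt : fS₂ k + fC₂ k < fS₁ k + fC₁ k := by
        by_contra hge
        push_neg at hge
        have := hexpr k _ _ _ _ (hF1nn k) hge (hC1nn k) hk.le
        linarith
      have hfS : fS₂ k < fS₁ k := by linarith
      exact ⟨lt_of_le_of_lt (hS2nn k) hfS, hFlt⟩
    obtain ⟨k, _, hk⟩ := Finset.exists_lt_of_sum_lt hCtot
    obtain ⟨hkS1, hkF⟩ := hCl k hk
    have hkS2 : 0 < fS₂ k := (hsupS k).1 hkS1
    have hkd : d k (fS₂ k + fC₂ k) < d k (fS₁ k + fC₁ k) :=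
      hincr k (hF2nn k) (hF1nn k) hkF
    -- every S-used link gets strictly less flow
    have hB : ∀ m, 0 < fS₁ m → fS₂ m + fC₂ m < fS₁ m + fC₁ m := by
      intro m hm
      have hm2 : 0 < fS₂ m := (hsupS m).1 hm
      have e1 := hS2eq m hm2 k
      have e2 := hS1eq k hkS1 m
      exact hlt_of m _ _ (hF2nn m) (hF1nn m) (by linarith)
    set T := Finset.univ.filter (fun m : Fin L => 0 < fS₁ m) with hT
    set U := Finset.univ.filter (fun m : Fin L => ¬ 0 < fS₁ m) with hU
    have hkT : k ∈ T := by simp [hT, hkS1]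
    have hsumT : ∑ m ∈ T, (fS₂ m + fC₂ m) < ∑ m ∈ T, (fS₁ m + fC₁ m) :=
      Finset.sum_lt_sum_of_nonempty ⟨k, hkT⟩
        (fun m hm => hB m (by simpa [hT] using hm))
    have hsplit1 := Finset.sum_filter_add_sum_filter_not Finset.univ
      (fun m : Fin L => 0 < fS₁ m) (fun m => fS₁ m + fC₁ m)
    have hsplit2 := Finset.sum_filter_add_sum_filter_not Finset.univ
      (fun m : Fin L => 0 < fS₁ m) (fun m => fS₂ m + fC₂ m)
    have hsumU : ∑ m ∈ U, (fS₁ m + fC₁ m) < ∑ m ∈ U, (fS₂ m + fC₂ m) := by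
      rw [hU]
      rw [hT] at hsumT
      linarith [htot]
    have hz : ∀ m ∈ U, fS₁ m = 0 ∧ fS₂ m = 0 := by
      intro m hm
      rw [hU] at hm
      simp only [Finset.mem_filter, Finset.mem_univ, true_and] at hm
      have h1 : fS₁ m = 0 := le_antisymm (not_lt.1 hm) (hS1nn m)
      have h2 : fS₂ m = 0 := by
        by_contra hne
        exact hm ((hsupS m).2 (lt_of_le_of_ne (hS2nn m) (Ne.symm hne)))
      exact ⟨h1, h2⟩
    have hUC : ∑ m ∈ U, fC₁ m < ∑ m ∈ U, fC₂ m := by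
      have e1 : ∑ m ∈ U, (fS₁ m + fC₁ m) = ∑ m ∈ U, fC₁ m :=
        Finset.sum_congr rfl (fun m hm => by rw [(hz m hm).1, zero_add])
      have e2 : ∑ m ∈ U, (fS₂ m + fC₂ m) = ∑ m ∈ U, fC₂ m :=
        Finset.sum_congr rfl (fun m hm => by rw [(hz m hm).2, zero_add])
      linarith
    obtain ⟨j, hjU, hj⟩ := Finset.exists_lt_of_sum_lt hUC
    have hjS1 : 0 < fS₁ j := (hCl j hj).1
    rw [hU] at hjU
    simp only [Finset.mem_filter, Finset.mem_univ, true_and] at hjU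
    exact hjU hjS1
end

section
/- Parallel-network monotonicity (loads): under the same hypotheses (α₁ < α₂, identical class supports at equilibrium, convex delays, strong monotonicity of the operator), every link satisfies f_l^{S*}(α₁) ≥ f_l^{S*}(α₂) and f_l^{C*}(α₁) ≤ f_l^{C*}(α₂): the selfish load weakly decreases and the fleet load weakly increases on each link as the fleet share grows. -/
open scoped BigOperators

/-- The marginal-cost map `x ↦ f x + x * f' x` is strictly monotone on `[0,∞)`
when `f` is strictly increasing with positive, monotone derivative. -/
lemma marg_strictMono (f : ℝ → ℝ) (hincr : StrictMonoOn f (Set.Ici 0))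
    (hd' : ∀ x ≥ (0:ℝ), 0 < deriv f x) (hmono : MonotoneOn (deriv f) (Set.Ici 0)) :
    StrictMonoOn (fun x => f x + x * deriv f x) (Set.Ici 0) := by
  intro a ha b hb hab
  have ha' : (0:ℝ) ≤ a := ha
  have hb' : (0:ℝ) ≤ b := hb
  have h1 : f a < f b := hincr ha hb hab
  have hdm : deriv f a ≤ deriv f b := hmono ha hb hab.le
  have hpa := hd' a ha'
  have hpb := hd' b hb'
  simp only
  nlinarith

theorem parallel_load_monotone
    (L : ℕ) (d : Fin L → ℝ → ℝ) (D : ℝ) (hD : 0 < D)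
    (hC2 : ∀ l, ContDiff ℝ 2 (d l))
    (hincr : ∀ l, StrictMonoOn (d l) (Set.Ici 0))
    (hd' : ∀ l, ∀ x ≥ (0:ℝ), 0 < deriv (d l) x)
    (hconv : ∀ l, ConvexOn ℝ (Set.Ici 0) (d l))
    (hsm1 : ∀ l, ∀ x ≥ (0:ℝ), ∀ y, 0 ≤ y → y ≤ x →
      0 < 2 * deriv (d l) x + y * deriv (deriv (d l)) x)
    (hsm2 : ∀ l, ∀ x ≥ (0:ℝ), ∀ y, 0 ≤ y → y ≤ x →
      1 / 4 * (2 * deriv (d l) x + y * deriv (deriv (d l)) x) < deriv (d l) x)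
    (α₁ α₂ : ℝ) (h1 : 0 < α₁) (h12 : α₁ < α₂) (h2 : α₂ < 1)
    (fS₁ fC₁ fS₂ fC₂ : Fin L → ℝ)
    (heq₁ : ParallelEquilibrium L d D α₁ fS₁ fC₁)
    (heq₂ : ParallelEquilibrium L d D α₂ fS₂ fC₂)
    (hsupS : ∀ l, 0 < fS₁ l ↔ 0 < fS₂ l)
    (hsupC : ∀ l, 0 < fC₁ l ↔ 0 < fC₂ l)
    :
    ∀ l, fS₂ l ≤ fS₁ l ∧ fC₁ l ≤ fC₂ l := by
  obtain ⟨hS1nn, hC1nn, hS1sum, hC1sum, hS1eq, hC1eq⟩ := heq₁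
  obtain ⟨hS2nn, hC2nn, hS2sum, hC2sum, hS2eq, hC2eq⟩ := heq₂
  clear hsm1 hsm2
  -- derivative is monotone on [0,∞)
  have dmono : ∀ l, MonotoneOn (deriv (d l)) (Set.Ici 0) := fun l =>
    (hconv l).monotoneOn_deriv fun x _ => ((hC2 l).differentiable (by norm_num)).differentiableAt
  have hg₁ : ∀ l, (fS₁ l + fC₁ l) ∈ Set.Ici (0:ℝ) := fun l =>
    Set.mem_Ici.mpr (add_nonneg (hS1nn l) (hC1nn l))
  have hg₂ : ∀ l, (fS₂ l + fC₂ l) ∈ Set.Ici (0:ℝ) := fun l =>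
    Set.mem_Ici.mpr (add_nonneg (hS2nn l) (hC2nn l))
  have hgsum₁ : ∑ l, (fS₁ l + fC₁ l) = D := by
    rw [Finset.sum_add_distrib, hS1sum, hC1sum]; ring
  have hgsum₂ : ∑ l, (fS₂ l + fC₂ l) = D := by
    rw [Finset.sum_add_distrib, hS2sum, hC2sum]; ring
  -- zero characterizations (keyed on class-1 positivity via equal supports)
  have hS1z : ∀ l, ¬ 0 < fS₁ l → fS₁ l = 0 := fun l h => le_antisymm (not_lt.mp h) (hS1nn l)
  have hC1z : ∀ l, ¬ 0 < fC₁ l → fC₁ l = 0 := fun l h => le_antisymm (not_lt.mp h) (hC1nn l)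
  have hS2z : ∀ l, ¬ 0 < fS₁ l → fS₂ l = 0 := fun l h =>
    le_antisymm (not_lt.mp (mt (hsupS l).mpr h)) (hS2nn l)
  have hC2z : ∀ l, ¬ 0 < fC₁ l → fC₂ l = 0 := fun l h =>
    le_antisymm (not_lt.mp (mt (hsupC l).mpr h)) (hC2nn l)
  -- support witnesses
  obtain ⟨ls, hls⟩ : ∃ l, 0 < fS₁ l := by
    by_contra h; push_neg at h
    have h0 : ∑ l, fS₁ l ≤ 0 := Finset.sum_nonpos fun l _ => h l
    rw [hS1sum] at h0; nlinarith
  obtain ⟨lc, hlc⟩ : ∃ l, 0 < fC₁ l := by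
    by_contra h; push_neg at h
    have h0 : ∑ l, fC₁ l ≤ 0 := Finset.sum_nonpos fun l _ => h l
    rw [hC1sum] at h0; nlinarith
  set lam1 := d ls (fS₁ ls + fC₁ ls) with hlam1def
  set lam2 := d ls (fS₂ ls + fC₂ ls) with hlam2def
  set mu1 := d lc (fS₁ lc + fC₁ lc) + fC₁ lc * deriv (d lc) (fS₁ lc + fC₁ lc) with hmu1def
  set mu2 := d lc (fS₂ lc + fC₂ lc) + fC₂ lc * deriv (d lc) (fS₂ lc + fC₂ lc) with hmu2def
  -- common values on supports
  have hLam1 : ∀ l, 0 < fS₁ l → d l (fS₁ l + fC₁ l) = lam1 := fun l hl =>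
    le_antisymm (hS1eq l hl ls) (hS1eq ls hls l)
  have hLam2 : ∀ l, 0 < fS₁ l → d l (fS₂ l + fC₂ l) = lam2 := fun l hl =>
    le_antisymm (hS2eq l ((hsupS l).mp hl) ls) (hS2eq ls ((hsupS ls).mp hls) l)
  have hMu1 : ∀ l, 0 < fC₁ l →
      d l (fS₁ l + fC₁ l) + fC₁ l * deriv (d l) (fS₁ l + fC₁ l) = mu1 := fun l hl =>
    le_antisymm (hC1eq l hl lc) (hC1eq lc hlc l)
  have hMu2 : ∀ l, 0 < fC₁ l →
      d l (fS₂ l + fC₂ l) + fC₂ l * deriv (d l) (fS₂ l + fC₂ l) = mu2 := fun l hl =>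
    le_antisymm (hC2eq l ((hsupC l).mp hl) lc) (hC2eq lc ((hsupC lc).mp hlc) l)
  -- both-support links
  have hboth₁ : ∀ l, 0 < fS₁ l → 0 < fC₁ l →
      fC₁ l * deriv (d l) (fS₁ l + fC₁ l) = mu1 - lam1 := by
    intro l hS hC
    have h1 := hMu1 l hC
    have h2 := hLam1 l hS
    linarith
  have hboth₂ : ∀ l, 0 < fS₁ l → 0 < fC₁ l →
      fC₂ l * deriv (d l) (fS₂ l + fC₂ l) = mu2 - lam2 := by
    intro l hS hC
    have h1 := hMu2 l hC
    have h2 := hLam2 l hS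
    linarith
  -- C-only links
  have hmarg : ∀ l, StrictMonoOn (fun x => d l x + x * deriv (d l) x) (Set.Ici 0) :=
    fun l => marg_strictMono (d l) (hincr l) (hd' l) (dmono l)
  have hConly₁ : ∀ l, ¬ 0 < fS₁ l → 0 < fC₁ l →
      d l (fC₁ l) + fC₁ l * deriv (d l) (fC₁ l) = mu1 := by
    intro l hS hC
    have h0 := hMu1 l hC
    rw [hS1z l hS, zero_add] at h0; exact h0
  have hConly₂ : ∀ l, ¬ 0 < fS₁ l → 0 < fC₁ l →
      d l (fC₂ l) + fC₂ l * deriv (d l) (fC₂ l) = mu2 := by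
    intro l hS hC
    have h0 := hMu2 l hC
    rw [hS2z l hS, zero_add] at h0; exact h0
  have hC1mem : ∀ l, fC₁ l ∈ Set.Ici (0:ℝ) := fun l => Set.mem_Ici.mpr (hC1nn l)
  have hC2mem : ∀ l, fC₂ l ∈ Set.Ici (0:ℝ) := fun l => Set.mem_Ici.mpr (hC2nn l)
  -- Step A : total loads on the S-support decrease
  have hA : ∀ l, 0 < fS₁ l → fS₂ l + fC₂ l ≤ fS₁ l + fC₁ l := by
    by_contra hcon
    push_neg at hcon
    obtain ⟨l₀, hl₀S, hl₀g⟩ := hcon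
    have hlamlt : lam1 < lam2 := by
      rw [← hLam1 l₀ hl₀S, ← hLam2 l₀ hl₀S]
      exact hincr l₀ (hg₁ l₀) (hg₂ l₀) hl₀g
    have hSlt : ∀ l, 0 < fS₁ l → fS₁ l + fC₁ l < fS₂ l + fC₂ l := by
      intro l hl
      have hdl : d l (fS₁ l + fC₁ l) < d l (fS₂ l + fC₂ l) := by
        rw [hLam1 l hl, hLam2 l hl]; exact hlamlt
      exact ((hincr l).lt_iff_lt (hg₁ l) (hg₂ l)).mp hdl
    have hex1 : ∃ l, ¬ 0 < fS₁ l ∧ 0 < fC₁ l ∧ fC₂ l < fC₁ l := by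
      by_contra hc; push_neg at hc
      have hle : ∀ l ∈ Finset.univ, fS₁ l + fC₁ l ≤ fS₂ l + fC₂ l := by
        intro l _
        by_cases hS : 0 < fS₁ l
        · exact (hSlt l hS).le
        · by_cases hC : 0 < fC₁ l
          · rw [hS1z l hS, hS2z l hS]
            simpa using hc l (not_lt.mp hS) hC
          · rw [hS1z l hS, hS2z l hS, hC1z l hC, hC2z l hC]
      have hsum := Finset.sum_lt_sum hle ⟨ls, Finset.mem_univ ls, hSlt ls hls⟩
      rw [hgsum₁, hgsum₂] at hsum
      exact lt_irrefl D hsum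
    obtain ⟨l₁, h1S, h1C, h1lt⟩ := hex1
    have hmult : mu2 < mu1 := by
      rw [← hConly₁ l₁ h1S h1C, ← hConly₂ l₁ h1S h1C]
      exact hmarg l₁ (hC2mem l₁) (hC1mem l₁) h1lt
    have hCle : ∀ l, 0 < fC₁ l → fC₂ l < fC₁ l := by
      intro l hC
      by_cases hS : 0 < fS₁ l
      · have e₁ := hboth₁ l hS hC
        have e₂ := hboth₂ l hS hC
        have hd2pos : 0 < deriv (d l) (fS₂ l + fC₂ l) := hd' l _ (hg₂ l)
        have hdle : deriv (d l) (fS₁ l + fC₁ l) ≤ deriv (d l) (fS₂ l + fC₂ l) :=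
          dmono l (hg₁ l) (hg₂ l) (hSlt l hS).le
        have hx : fC₁ l * deriv (d l) (fS₁ l + fC₁ l) ≤
            fC₁ l * deriv (d l) (fS₂ l + fC₂ l) :=
          mul_le_mul_of_nonneg_left hdle (hC1nn l)
        have hlt2 : fC₂ l * deriv (d l) (fS₂ l + fC₂ l) <
            fC₁ l * deriv (d l) (fS₂ l + fC₂ l) := by linarith
        exact lt_of_mul_lt_mul_right hlt2 hd2pos.le
      · by_contra hcge; push_neg at hcge
        have hmm : mu1 ≤ mu2 := by
          rw [← hConly₁ l hS hC, ← hConly₂ l hS hC]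
          exact ((hmarg l).le_iff_le (hC1mem l) (hC2mem l)).mpr hcge
        linarith
    have hsum : ∑ l, fC₂ l < ∑ l, fC₁ l := by
      apply Finset.sum_lt_sum
      · intro l _
        by_cases hC : 0 < fC₁ l
        · exact (hCle l hC).le
        · rw [hC1z l hC, hC2z l hC]
      · exact ⟨lc, Finset.mem_univ lc, hCle lc hlc⟩
    rw [hC1sum, hC2sum] at hsum
    nlinarith
  have hlamle : lam2 ≤ lam1 :=
    ((hincr ls).monotoneOn) (hg₂ ls) (hg₁ ls) (hA ls hls)
  -- Step B : the common marginal value increases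
  have hB : mu1 ≤ mu2 := by
    by_contra hc; push_neg at hc
    rcases lt_or_eq_of_le hlamle with hlt | heqq
    · -- lam2 < lam1 : loads on S-support strictly decrease, so some C-only load increases
      have hSgt : ∀ l, 0 < fS₁ l → fS₂ l + fC₂ l < fS₁ l + fC₁ l := by
        intro l hl
        have hdl : d l (fS₂ l + fC₂ l) < d l (fS₁ l + fC₁ l) := by
          rw [hLam1 l hl, hLam2 l hl]; exact hlt
        exact ((hincr l).lt_iff_lt (hg₂ l) (hg₁ l)).mp hdl
      have hex : ∃ l, ¬ 0 < fS₁ l ∧ 0 < fC₁ l ∧ fC₁ l < fC₂ l := by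
        by_contra hc2; push_neg at hc2
        have hle : ∀ l ∈ Finset.univ, fS₂ l + fC₂ l ≤ fS₁ l + fC₁ l := by
          intro l _
          by_cases hS : 0 < fS₁ l
          · exact (hSgt l hS).le
          · by_cases hC : 0 < fC₁ l
            · rw [hS1z l hS, hS2z l hS]
              simpa using hc2 l (not_lt.mp hS) hC
            · rw [hS1z l hS, hS2z l hS, hC1z l hC, hC2z l hC]
        have hsum := Finset.sum_lt_sum hle ⟨ls, Finset.mem_univ ls, hSgt ls hls⟩
        rw [hgsum₁, hgsum₂] at hsum
        exact lt_irrefl D hsum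
      obtain ⟨l₁, h1S, h1C, h1lt⟩ := hex
      have hmm : mu1 < mu2 := by
        rw [← hConly₁ l₁ h1S h1C, ← hConly₂ l₁ h1S h1C]
        exact hmarg l₁ (hC1mem l₁) (hC2mem l₁) h1lt
      linarith
    · -- lam2 = lam1 : loads on S-support unchanged, all fleet loads strictly drop, contradiction
      have hgeq : ∀ l, 0 < fS₁ l → fS₂ l + fC₂ l = fS₁ l + fC₁ l := by
        intro l hl
        have hdq : d l (fS₂ l + fC₂ l) = d l (fS₁ l + fC₁ l) := by
          rw [hLam1 l hl, hLam2 l hl, heqq]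
        exact (hincr l).injOn (hg₂ l) (hg₁ l) hdq
      have hCle : ∀ l, 0 < fC₁ l → fC₂ l < fC₁ l := by
        intro l hC
        by_cases hS : 0 < fS₁ l
        · have e₁ := hboth₁ l hS hC
          have e₂ := hboth₂ l hS hC
          rw [hgeq l hS] at e₂
          have hdpos : 0 < deriv (d l) (fS₁ l + fC₁ l) := hd' l _ (hg₁ l)
          have hlt2 : fC₂ l * deriv (d l) (fS₁ l + fC₁ l) <
              fC₁ l * deriv (d l) (fS₁ l + fC₁ l) := by linarith
          exact lt_of_mul_lt_mul_right hlt2 hdpos.le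
        · by_contra hcge; push_neg at hcge
          have hmm : mu1 ≤ mu2 := by
            rw [← hConly₁ l hS hC, ← hConly₂ l hS hC]
            exact ((hmarg l).le_iff_le (hC1mem l) (hC2mem l)).mpr hcge
          linarith
      have hsum : ∑ l, fC₂ l < ∑ l, fC₁ l := by
        apply Finset.sum_lt_sum
        · intro l _
          by_cases hCc : 0 < fC₁ l
          · exact (hCle l hCc).le
          · rw [hC1z l hCc, hC2z l hCc]
        · exact ⟨lc, Finset.mem_univ lc, hCle lc hlc⟩
      rw [hC1sum, hC2sum] at hsum
      nlinarith
  -- Conclusion, link by link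
  intro l
  by_cases hS : 0 < fS₁ l
  · by_cases hC : 0 < fC₁ l
    · have hgle : fS₂ l + fC₂ l ≤ fS₁ l + fC₁ l := hA l hS
      have e₁ := hboth₁ l hS hC
      have e₂ := hboth₂ l hS hC
      have hd2pos : 0 < deriv (d l) (fS₂ l + fC₂ l) := hd' l _ (hg₂ l)
      have hdle : deriv (d l) (fS₂ l + fC₂ l) ≤ deriv (d l) (fS₁ l + fC₁ l) :=
        dmono l (hg₂ l) (hg₁ l) hgle
      have hfC : fC₁ l ≤ fC₂ l := by
        have hx : fC₁ l * deriv (d l) (fS₂ l + fC₂ l) ≤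
            fC₁ l * deriv (d l) (fS₁ l + fC₁ l) :=
          mul_le_mul_of_nonneg_left hdle (hC1nn l)
        have hle2 : fC₁ l * deriv (d l) (fS₂ l + fC₂ l) ≤
            fC₂ l * deriv (d l) (fS₂ l + fC₂ l) := by linarith
        exact le_of_mul_le_mul_right hle2 hd2pos
      exact ⟨by linarith, hfC⟩
    · have h0 := hC1z l hC
      have h0' := hC2z l hC
      have hgle := hA l hS
      constructor
      · linarith
      · rw [h0, h0']
  · by_cases hC : 0 < fC₁ l
    · have h0 := hS1z l hS
      have h0' := hS2z l hS
      constructor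
      · rw [h0, h0']
      · by_contra hcon; push_neg at hcon
        have hmm : mu2 < mu1 := by
          rw [← hConly₁ l hS hC, ← hConly₂ l hS hC]
          exact hmarg l (hC2mem l) (hC1mem l) hcon
        linarith
    · constructor
      · rw [hS1z l hS, hS2z l hS]
      · rw [hC1z l hC, hC2z l hC]
end

section
/- Parallel-network PoA monotonicity (fixed supports): if α₁ < α₂ and the equilibrium supports of both classes coincide at α₁ and α₂, then the total delay at equilibrium is non-increasing: T(f*(α₂)) ≤ T(f*(α₁)), hence PoA(α₁) ≥ PoA(α₂). Key inequalities: T^S(f*(α₂)) = θ(α₂)·Σ_l f_l^{S*}(α₂) ≤ Σ_l f_l^{S*}(α₂)·d_l(F_l*(α₁)), and, since f^{C*}(α₁) + (f^{S*}(α₁) - f^{S*}(α₂)) is feasible for class C at share α₂ and f^{C*}(α₂) minimizes the fleet cost given f^{S*}(α₂), T^C(f*(α₂)) ≤ Σ_l (f_l^{C*}(α₁) + f_l^{S*}(α₁) - f_l^{S*}(α₂))·d_l(F_l*(α₁)). -/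
open scoped BigOperators

lemma diff_of_contDiff2 (f : ℝ → ℝ) (h : ContDiff ℝ 2 f) :
    Differentiable ℝ f ∧ Differentiable ℝ (deriv f) := by
  rw [← one_add_one_eq_two, contDiff_succ_iff_deriv] at h
  exact ⟨h.1, h.2.2.differentiable one_ne_zero⟩

lemma shift_hasDeriv (f : ℝ → ℝ) (hf : Differentiable ℝ f) (c t : ℝ) :
    HasDerivAt (fun s => f (c + s)) (deriv f (c + t)) t := by
  exact (hf (c + t)).hasDerivAt.comp_const_add c t

/-- Tangent-line inequality for `φ(t) = t * f (c + t)` on `[0, ∞)`. -/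
lemma tangent_aux (f : ℝ → ℝ) (hC2 : ContDiff ℝ 2 f)
    (hsm1 : ∀ x ≥ (0:ℝ), ∀ y, 0 ≤ y → y ≤ x →
      0 < 2 * deriv f x + y * deriv (deriv f) x)
    (c : ℝ) (hc : 0 ≤ c) (x y : ℝ) (hx : 0 ≤ x) (hy : 0 ≤ y) :
    x * f (c + x) + (f (c + x) + x * deriv f (c + x)) * (y - x) ≤ y * f (c + y) := by
  obtain ⟨hdf, hdf'⟩ := diff_of_contDiff2 f hC2
  set φ : ℝ → ℝ := fun t => t * f (c + t) with hφdef
  have hφ : ∀ t : ℝ, HasDerivAt φ (f (c + t) + t * deriv f (c + t)) t := by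
    intro t
    have := (hasDerivAt_id t).mul (shift_hasDeriv f hdf c t)
    exact this.congr_deriv (by simp)
  have hψ : ∀ t : ℝ, HasDerivAt (fun s => f (c + s) + s * deriv f (c + s))
      (2 * deriv f (c + t) + t * deriv (deriv f) (c + t)) t := by
    intro t
    have h1 := shift_hasDeriv f hdf c t
    have h2 := (hasDerivAt_id t).mul (shift_hasDeriv (deriv f) hdf' c t)
    have h3 := h1.add h2
    simp only [id_eq, one_mul] at h3
    refine h3.congr_deriv ?_
    ring
  have hconvφ : ConvexOn ℝ (Set.Ici (0:ℝ)) φ := by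
    apply convexOn_of_hasDerivWithinAt2_nonneg (convex_Ici 0)
      (f' := fun t => f (c + t) + t * deriv f (c + t))
      (f'' := fun t => 2 * deriv f (c + t) + t * deriv (deriv f) (c + t))
    · exact Continuous.continuousOn (by fun_prop)
    · intro t ht
      exact (hφ t).hasDerivWithinAt
    · intro t ht
      exact (hψ t).hasDerivWithinAt
    · intro t ht
      rw [interior_Ici, Set.mem_Ioi] at ht
      exact le_of_lt (hsm1 (c + t) (by linarith [ht.le]) t ht.le (by linarith))
  rcases lt_trichotomy x y with hlt | heq | hgt
  · have := hconvφ.le_slope_of_hasDerivAt hx hy hlt (hφ x)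
    rw [slope_def_field] at this
    have h2 : (f (c + x) + x * deriv f (c + x)) * (y - x) ≤ φ y - φ x := by
      rw [← le_div_iff₀ (by linarith : (0:ℝ) < y - x)]
      exact this
    have e1 : φ y = y * f (c + y) := rfl
    have e2 : φ x = x * f (c + x) := rfl
    linarith [h2]
  · subst heq; simp
  · have := hconvφ.slope_le_of_hasDerivAt hy hx hgt (hφ x)
    rw [slope_def_field] at this
    have h2 : φ x - φ y ≤ (f (c + x) + x * deriv f (c + x)) * (x - y) := by
      rw [← div_le_iff₀ (by linarith : (0:ℝ) < x - y)]
      exact this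
    have h4 : (f (c + x) + x * deriv f (c + x)) * (y - x)
        = -((f (c + x) + x * deriv f (c + x)) * (x - y)) := by ring
    have e1 : φ y = y * f (c + y) := rfl
    have e2 : φ x = x * f (c + x) := rfl
    linarith [h2, h4]

theorem parallel_poa_monotone_fixed_supports
    (L : ℕ) (d : Fin L → ℝ → ℝ) (D : ℝ) (hD : 0 < D)
    (hC2 : ∀ l, ContDiff ℝ 2 (d l))
    (hincr : ∀ l, StrictMonoOn (d l) (Set.Ici 0))
    (hd' : ∀ l, ∀ x ≥ (0:ℝ), 0 < deriv (d l) x)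
    (hconv : ∀ l, ConvexOn ℝ (Set.Ici 0) (d l))
    (hsm1 : ∀ l, ∀ x ≥ (0:ℝ), ∀ y, 0 ≤ y → y ≤ x →
      0 < 2 * deriv (d l) x + y * deriv (deriv (d l)) x)
    (hsm2 : ∀ l, ∀ x ≥ (0:ℝ), ∀ y, 0 ≤ y → y ≤ x →
      1 / 4 * (2 * deriv (d l) x + y * deriv (deriv (d l)) x) < deriv (d l) x)
    (α₁ α₂ : ℝ) (h1 : 0 < α₁) (h12 : α₁ < α₂) (h2 : α₂ < 1)
    (fS₁ fC₁ fS₂ fC₂ : Fin L → ℝ)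
    (heq₁ : ParallelEquilibrium L d D α₁ fS₁ fC₁)
    (heq₂ : ParallelEquilibrium L d D α₂ fS₂ fC₂)
    (hsupS : ∀ l, 0 < fS₁ l ↔ 0 < fS₂ l)
    (hsupC : ∀ l, 0 < fC₁ l ↔ 0 < fC₂ l)
    (Topt : ℝ) (hTopt : 0 < Topt) :
    (∑ l, (fS₂ l + fC₂ l) * d l (fS₂ l + fC₂ l)) ≤
      (∑ l, (fS₁ l + fC₁ l) * d l (fS₁ l + fC₁ l)) ∧
    (∑ l, (fS₂ l + fC₂ l) * d l (fS₂ l + fC₂ l)) / Topt ≤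
      (∑ l, (fS₁ l + fC₁ l) * d l (fS₁ l + fC₁ l)) / Topt := by
  obtain ⟨hS₁n, hC₁n, hS₁sum, hC₁sum, hS₁eq, hC₁eq⟩ := heq₁
  obtain ⟨hS₂n, hC₂n, hS₂sum, hC₂sum, hS₂eq, hC₂eq⟩ := heq₂
  have hdmono : ∀ l, MonotoneOn (deriv (d l)) (Set.Ici 0) := fun l =>
    (hconv l).monotoneOn_deriv (fun x _ =>
      ((hC2 l).differentiable two_ne_zero).differentiableAt)
  have hF₁n : ∀ l, (0:ℝ) ≤ fS₁ l + fC₁ l := fun l => add_nonneg (hS₁n l) (hC₁n l)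
  have hF₂n : ∀ l, (0:ℝ) ≤ fS₂ l + fC₂ l := fun l => add_nonneg (hS₂n l) (hC₂n l)
  -- existence of an S-used link
  obtain ⟨l₀, -, hl₀⟩ : ∃ l ∈ Finset.univ, (0:ℝ) < fS₁ l := by
    apply Finset.exists_lt_of_sum_lt (f := fun _ => (0:ℝ))
    rw [Finset.sum_const_zero, hS₁sum]
    nlinarith
  have hl₀' : 0 < fS₂ l₀ := (hsupS l₀).1 hl₀
  -- common S delays
  have hθ₁ : ∀ l, 0 < fS₁ l →
      d l (fS₁ l + fC₁ l) = d l₀ (fS₁ l₀ + fC₁ l₀) :=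
    fun l hl => le_antisymm (hS₁eq l hl l₀) (hS₁eq l₀ hl₀ l)
  have hθ₂ : ∀ l, 0 < fS₂ l →
      d l (fS₂ l + fC₂ l) = d l₀ (fS₂ l₀ + fC₂ l₀) :=
    fun l hl => le_antisymm (hS₂eq l hl l₀) (hS₂eq l₀ hl₀' l)
  -- Step A : θ₂ ≤ θ₁
  have hθle : d l₀ (fS₂ l₀ + fC₂ l₀) ≤ d l₀ (fS₁ l₀ + fC₁ l₀) := by
    by_contra hlt
    push_neg at hlt
    -- loads increase strictly on all S-used links
    have hFlt : ∀ l, 0 < fS₁ l → fS₁ l + fC₁ l < fS₂ l + fC₂ l := by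
      intro l hl
      have h1 := hθ₁ l hl
      have h2 := hθ₂ l ((hsupS l).1 hl)
      exact ((hincr l).lt_iff_lt (hF₁n l) (hF₂n l)).mp (by rw [h1, h2]; exact hlt)
    have hFsum₁ : ∑ l, (fS₁ l + fC₁ l) = D := by
      rw [Finset.sum_add_distrib, hS₁sum, hC₁sum]; ring
    have hFsum₂ : ∑ l, (fS₂ l + fC₂ l) = D := by
      rw [Finset.sum_add_distrib, hS₂sum, hC₂sum]; ring
    -- find a C-only link whose load strictly decreases
    have hA : ∑ l ∈ Finset.univ.filter (fun l => 0 < fS₁ l), (fS₁ l + fC₁ l)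
        < ∑ l ∈ Finset.univ.filter (fun l => 0 < fS₁ l), (fS₂ l + fC₂ l) := by
      apply Finset.sum_lt_sum_of_nonempty
      · exact ⟨l₀, Finset.mem_filter.mpr ⟨Finset.mem_univ _, hl₀⟩⟩
      · exact fun i hi => hFlt i (Finset.mem_filter.mp hi).2
    have hcompl : ∑ l ∈ Finset.univ.filter (fun l => ¬ 0 < fS₁ l), (fS₂ l + fC₂ l)
        < ∑ l ∈ Finset.univ.filter (fun l => ¬ 0 < fS₁ l), (fS₁ l + fC₁ l) := by
      have e1 := Finset.sum_filter_add_sum_filter_not Finset.univ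
        (fun l => 0 < fS₁ l) (fun l => fS₁ l + fC₁ l)
      have e2 := Finset.sum_filter_add_sum_filter_not Finset.univ
        (fun l => 0 < fS₁ l) (fun l => fS₂ l + fC₂ l)
      rw [hFsum₁] at e1
      rw [hFsum₂] at e2
      linarith
    obtain ⟨e, he, hFe⟩ := Finset.exists_lt_of_sum_lt hcompl
    have hs1e : fS₁ e = 0 :=
      le_antisymm (not_lt.mp (Finset.mem_filter.mp he).2) (hS₁n e)
    have hs2e : fS₂ e = 0 := by
      by_contra h
      exact (Finset.mem_filter.mp he).2 ((hsupS e).2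
        (lt_of_le_of_ne (hS₂n e) (Ne.symm h)))
    have hC1e : 0 < fC₁ e := by
      have := hF₂n e; rw [hs1e, hs2e] at hFe; linarith
    have hC2e : 0 < fC₂ e := (hsupC e).1 hC1e
    have hCe : fC₂ e ≤ fC₁ e := by rw [hs1e, hs2e] at hFe; linarith
    -- find a mixed link with decreased S flow
    obtain ⟨l₁, -, hl₁⟩ : ∃ l ∈ Finset.univ, fS₂ l < fS₁ l := by
      apply Finset.exists_lt_of_sum_lt
      rw [hS₁sum, hS₂sum]
      nlinarith
    have hS1l₁ : 0 < fS₁ l₁ := lt_of_le_of_lt (hS₂n l₁) hl₁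
    have hFl₁ : fS₁ l₁ + fC₁ l₁ < fS₂ l₁ + fC₂ l₁ := hFlt l₁ hS1l₁
    have hCl₁ : fC₁ l₁ < fC₂ l₁ := by linarith
    have hC2l₁ : 0 < fC₂ l₁ := lt_of_le_of_lt (hC₁n l₁) hCl₁
    have hC1l₁ : 0 < fC₁ l₁ := (hsupC l₁).2 hC2l₁
    -- the contradiction chain
    have ha := hC₂eq l₁ hC2l₁ e
    have hb := hC₁eq e hC1e l₁
    have hde : d e (fS₂ e + fC₂ e) < d e (fS₁ e + fC₁ e) :=
      hincr e (hF₂n e) (hF₁n e) hFe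
    have hde' : fC₂ e * deriv (d e) (fS₂ e + fC₂ e)
        ≤ fC₁ e * deriv (d e) (fS₁ e + fC₁ e) :=
      mul_le_mul hCe (hdmono e (hF₂n e) (hF₁n e) hFe.le)
        (le_of_lt (hd' e _ (hF₂n e))) (hC₁n e)
    have hdl : d l₁ (fS₁ l₁ + fC₁ l₁) < d l₁ (fS₂ l₁ + fC₂ l₁) :=
      hincr l₁ (hF₁n l₁) (hF₂n l₁) hFl₁
    have hdl' : fC₁ l₁ * deriv (d l₁) (fS₁ l₁ + fC₁ l₁)
        ≤ fC₂ l₁ * deriv (d l₁) (fS₂ l₁ + fC₂ l₁) :=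
      mul_le_mul hCl₁.le (hdmono l₁ (hF₁n l₁) (hF₂n l₁) hFl₁.le)
        (le_of_lt (hd' l₁ _ (hF₁n l₁))) (hC₂n l₁)
    linarith
  -- Step B : loads decrease on S-used links
  have hFle : ∀ l, 0 < fS₂ l → fS₂ l + fC₂ l ≤ fS₁ l + fC₁ l := by
    intro l hl
    have h1 := hθ₁ l ((hsupS l).2 hl)
    have h2 := hθ₂ l hl
    exact ((hincr l).le_iff_le (hF₂n l) (hF₁n l)).mp (by rw [h1, h2]; exact hθle)
  -- Step C : the comparison flow g for class C
  set g : Fin L → ℝ := fun l => fC₁ l + fS₁ l - fS₂ l with hgdef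
  have hg : ∀ l, 0 ≤ g l := by
    intro l
    show 0 ≤ fC₁ l + fS₁ l - fS₂ l
    rcases (hS₂n l).eq_or_lt with h | h
    · have := hS₁n l; have := hC₁n l; rw [← h]; linarith
    · have := hFle l h
      have := hC₂n l
      linarith
  have hgsum : ∑ l, g l = α₂ * D := by
    simp only [hgdef]
    rw [Finset.sum_sub_distrib, Finset.sum_add_distrib, hC₁sum, hS₁sum, hS₂sum]
    ring
  -- Step D : claim 1
  have claim1 : ∑ l, fS₂ l * d l (fS₂ l + fC₂ l)
      ≤ ∑ l, fS₂ l * d l (fS₁ l + fC₁ l) := by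
    apply Finset.sum_le_sum
    intro l _
    rcases (hS₂n l).eq_or_lt with h | h
    · rw [← h]; simp
    · apply mul_le_mul_of_nonneg_left _ (hS₂n l)
      rw [hθ₂ l h, hθ₁ l ((hsupS l).2 h)]
      exact hθle
  -- Step E : claim 2
  obtain ⟨l₂, -, hl₂⟩ : ∃ l ∈ Finset.univ, (0:ℝ) < fC₂ l := by
    apply Finset.exists_lt_of_sum_lt (f := fun _ => (0:ℝ))
    rw [Finset.sum_const_zero, hC₂sum]
    nlinarith
  set m : Fin L → ℝ := fun l =>
    d l (fS₂ l + fC₂ l) + fC₂ l * deriv (d l) (fS₂ l + fC₂ l) with hmdef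
  set μ : ℝ := m l₂ with hμdef
  have hμle : ∀ l, μ ≤ m l := fun l => hC₂eq l₂ hl₂ l
  have hμeq : ∀ l, 0 < fC₂ l → m l = μ :=
    fun l h => le_antisymm (hC₂eq l h l₂) (hμle l)
  have htan : ∀ l, fC₂ l * d l (fS₂ l + fC₂ l) + m l * (g l - fC₂ l)
      ≤ g l * d l (fS₁ l + fC₁ l) := by
    intro l
    have ht := tangent_aux (d l) (hC2 l) (hsm1 l) (fS₂ l) (hS₂n l)
      (fC₂ l) (g l) (hC₂n l) (hg l)
    rw [show fS₂ l + g l = fS₁ l + fC₁ l from by simp only [hgdef]; ring] at ht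
    simpa [hmdef] using ht
  have hmsum : 0 ≤ ∑ l, m l * (g l - fC₂ l) := by
    have hsplit : ∑ l, m l * (g l - fC₂ l)
        = (∑ l, (m l - μ) * (g l - fC₂ l)) + μ * (∑ l, g l - ∑ l, fC₂ l) := by
      have hterm : ∀ l : Fin L, m l * (g l - fC₂ l)
          = (m l - μ) * (g l - fC₂ l) + μ * (g l - fC₂ l) := fun l => by ring
      rw [Finset.sum_congr rfl (fun l _ => hterm l), Finset.sum_add_distrib,
        ← Finset.mul_sum, Finset.sum_sub_distrib]
    rw [hsplit, hgsum, hC₂sum, sub_self, mul_zero, add_zero]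
    apply Finset.sum_nonneg
    intro l _
    rcases (hC₂n l).eq_or_lt with h | h
    · apply mul_nonneg (by linarith [hμle l]) (by rw [← h]; simpa using hg l)
    · rw [hμeq l h, sub_self, zero_mul]
  have claim2 : ∑ l, fC₂ l * d l (fS₂ l + fC₂ l)
      ≤ ∑ l, g l * d l (fS₁ l + fC₁ l) := by
    have := Finset.sum_le_sum (fun l (_ : l ∈ Finset.univ) => htan l)
    rw [Finset.sum_add_distrib] at this
    linarith [hmsum]
  -- conclusion
  have main : (∑ l, (fS₂ l + fC₂ l) * d l (fS₂ l + fC₂ l)) ≤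
      (∑ l, (fS₁ l + fC₁ l) * d l (fS₁ l + fC₁ l)) := by
    have e2 : ∑ l, (fS₂ l + fC₂ l) * d l (fS₂ l + fC₂ l)
        = (∑ l, fS₂ l * d l (fS₂ l + fC₂ l))
          + ∑ l, fC₂ l * d l (fS₂ l + fC₂ l) := by
      rw [← Finset.sum_add_distrib]
      apply Finset.sum_congr rfl
      intro l _; ring
    have e1 : ∑ l, (fS₁ l + fC₁ l) * d l (fS₁ l + fC₁ l)
        = (∑ l, fS₂ l * d l (fS₁ l + fC₁ l))
          + ∑ l, g l * d l (fS₁ l + fC₁ l) := by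
      rw [← Finset.sum_add_distrib]
      apply Finset.sum_congr rfl
      intro l _
      simp only [hgdef]
      ring
    rw [e1, e2]
    exact add_le_add claim1 claim2
  exact ⟨main, div_le_div_of_nonneg_right main hTopt.le⟩
end
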